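/- arXiv:2209.01957 — 2 statements merged into one kernel-verified Lean document; each statement's English description precedes it below -/
import Mathlib

section
/- Let $D \subset D^* \subset \Omega$ be open connected subsets with $\delta = \operatorname{dist}(D, \partial D^*\setminus\partial\Omega) > 0$. Suppose for every pair of nested subdomains $E \subset E'$ with $\operatorname{dist}(E, \partial E'\setminus\partial\Omega) = \delta/N$, every generalized $a_\varepsilon$-harmonic function $u$ on $E'$ satisfies $\|u\|_{L^2(E)} \le (N\varepsilon a_{\max}^{1/2}C_d/\delta)\|u\|_{L^2(E')}$ (the one-layer Caccioppoli bound). If $\delta/(e\varepsilon a_{\max}^{1/2}C_d) > 1$, then every generalized $a_\varepsilon$-harmonic function $u$ on $D^*$ satisfies $\|u\|_{L^2(D)} \le e^{1 - \delta/(e\varepsilon a_{\max}^{1/2}C_d)}\, \|u\|_{L^2(D^*)}$. -/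
open MeasureTheory

/-- The distance between two sets, `dist(S,T) = inf {dist x y | x ∈ S, y ∈ T}`. -/
noncomputable def setDist {X : Type*} [PseudoMetricSpace X] (S T : Set X) : ℝ :=
  sInf ((fun p : X × X => dist p.1 p.2) '' (S ×ˢ T))

namespace Stmt5Aux

open Metric

variable {X : Type*} [PseudoMetricSpace X]

lemma le_infDist' {s : Set X} {x : X} {b : ℝ} (hs : s.Nonempty)
    (h : ∀ y ∈ s, b ≤ dist x y) : b ≤ infDist x s := by
  by_contra hlt
  push_neg at hlt
  obtain ⟨y, hy, hd⟩ := (infDist_lt_iff hs).1 hlt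
  exact absurd (h y hy) (not_le.2 hd)

lemma setDist_le_dist {S T : Set X} {x y : X} (hx : x ∈ S) (hy : y ∈ T) :
    setDist S T ≤ dist x y :=
  csInf_le ⟨0, by rintro z ⟨p, _, rfl⟩; exact dist_nonneg⟩ ⟨(x, y), ⟨hx, hy⟩, rfl⟩

lemma le_setDist {S T : Set X} {b : ℝ} (hS : S.Nonempty) (hT : T.Nonempty)
    (h : ∀ x ∈ S, ∀ y ∈ T, b ≤ dist x y) : b ≤ setDist S T := by
  apply le_csInf
  · obtain ⟨x, hx⟩ := hS
    obtain ⟨y, hy⟩ := hT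
    exact ⟨_, ⟨(x, y), ⟨hx, hy⟩, rfl⟩⟩
  · rintro z ⟨⟨x, y⟩, ⟨hx, hy⟩, rfl⟩
    exact h x hx y hy

lemma setDist_le_infDist_right {S T : Set X} {y : X} (hy : y ∈ T) (hS : S.Nonempty) :
    setDist S T ≤ infDist y S := by
  apply le_of_forall_pos_le_add
  intro ε hε
  obtain ⟨x, hx, hd⟩ := (infDist_lt_iff hS).1 (show infDist y S < infDist y S + ε by linarith)
  calc setDist S T ≤ dist x y := setDist_le_dist hx hy
    _ = dist y x := dist_comm _ _
    _ ≤ infDist y S + ε := le_of_lt hd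

lemma setDist_le_infDist_left {S T : Set X} {x : X} (hx : x ∈ S) (hT : T.Nonempty) :
    setDist S T ≤ infDist x T := by
  apply le_of_forall_pos_le_add
  intro ε hε
  obtain ⟨y, hy, hd⟩ := (infDist_lt_iff hT).1 (show infDist x T < infDist x T + ε by linarith)
  calc setDist S T ≤ dist x y := setDist_le_dist hx hy
    _ ≤ infDist x T + ε := le_of_lt hd

lemma no_clopen {S U : Set X} (hS : IsPreconnected S) (hU : IsOpen U) (hUS : U ⊆ S)
    (hne : U.Nonempty) (hcl : closure U ∩ S ⊆ U) {z : X} (hzS : z ∈ S) (hzU : z ∉ U) :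
    False := by
  obtain ⟨w, hwS, hwU, hwV⟩ := hS U (closure U)ᶜ hU isClosed_closure.isOpen_compl
    (fun x hx => by
      by_cases hxc : x ∈ closure U
      · exact Or.inl (hcl ⟨hxc, hx⟩)
      · exact Or.inr hxc)
    (hne.imp fun x hx => ⟨hUS hx, hx⟩)
    ⟨z, hzS, fun hc => hzU (hcl ⟨hc, hzS⟩)⟩
  exact hwV (subset_closure hwU)

lemma exists_rel_frontier {S U : Set X} (hS : IsPreconnected S) (hU : IsOpen U) (hUS : U ⊆ S)
    (hne : U.Nonempty) {z : X} (hzS : z ∈ S) (hzU : z ∉ U) :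
    ∃ y, y ∈ S ∧ y ∈ closure U ∧ y ∉ U := by
  by_contra hcon
  push_neg at hcon
  exact no_clopen hS hU hUS hne (fun y hy => hcon y hy.2 hy.1) hzS hzU

lemma dist_zero_of_mem_closure_singleton {q y : X} (h : y ∈ closure ({q} : Set X)) :
    dist y q = 0 := by
  have h0 : infDist y ({q} : Set X) = 0 :=
    (mem_closure_iff_infDist_zero (Set.singleton_nonempty q)).1 h
  rwa [infDist_singleton] at h0

end Stmt5Aux

open Stmt5Aux Metric

/-- exponential decay estimate (3.26) of Lemma 3.4: iterating the one-layer
Caccioppoli bound over `N = ⌊δ/(e ε √a_max C_d)⌋` nested subdomains of width `δ/N` yields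
`‖u‖_{L²(D)} ≤ e^{1-δ/(e ε √a_max C_d)} ‖u‖_{L²(D*)}` for every generalized
`a_ε`-harmonic function `u` on `D*`. The family `Harm s` of generalized `a_ε`-harmonic
functions on `s` is antitone in `s` (harmonicity restricts to subdomains). -/
theorem stmt_5 {X : Type*} [PseudoMetricSpace X] [MeasurableSpace X]
    (μ : Measure X)
    (Ω D Dstar : Set X) (hDo : IsOpen D) (hDso : IsOpen Dstar)
    (hDc : IsConnected D) (hDsc : IsConnected Dstar)
    (hsub : D ⊆ Dstar) (hsub2 : Dstar ⊆ Ω)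
    (Harm : Set X → Set (X → ℝ))
    (hmono : ∀ s t : Set X, s ⊆ t → Harm t ⊆ Harm s)
    (ε amax Cd : ℝ) (hε0 : 0 < ε) (hε1 : ε ≤ 1) (hamax : 0 < amax) (hCd : 0 < Cd)
    (δ : ℝ) (hδdef : δ = setDist D (frontier Dstar \ frontier Ω)) (hδ : 0 < δ)
    (γ : ℝ) (hγdef : γ = δ / (Real.exp 1 * ε * Real.sqrt amax * Cd)) (hγ : 1 < γ)
    (N : ℕ) (hN : N = ⌊γ⌋₊)
    -- the one-layer Caccioppoli bound on nested subdomains at distance δ/N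
    (honelayer : ∀ E E' : Set X, E ⊆ E' → E' ⊆ Dstar →
      setDist E (frontier E' \ frontier Ω) = δ / N →
      ∀ u ∈ Harm E',
        Real.sqrt (∫ x in E, (u x) ^ 2 ∂μ) ≤
          ((N : ℝ) * ε * Real.sqrt amax * Cd / δ) * Real.sqrt (∫ x in E', (u x) ^ 2 ∂μ)) :
    ∀ u ∈ Harm Dstar,
      Real.sqrt (∫ x in D, (u x) ^ 2 ∂μ) ≤
        Real.exp (1 - γ) * Real.sqrt (∫ x in Dstar, (u x) ^ 2 ∂μ) := by
  intro u hu
  -- basic numerology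
  have hγ0 : (0:ℝ) < γ := lt_trans one_pos hγ
  have hN1 : 1 ≤ N := by rw [hN]; exact Nat.floor_pos.2 hγ.le
  have hNpos : (0:ℝ) < N := by exact_mod_cast hN1
  have hNleγ : (N:ℝ) ≤ γ := by rw [hN]; exact Nat.floor_le hγ0.le
  have hγltN1 : γ < (N:ℝ) + 1 := by rw [hN]; exact Nat.lt_floor_add_one γ
  set r : ℝ := δ / (N:ℝ) with hrdef
  have hr0 : 0 < r := div_pos hδ hNpos
  have hNr : (N:ℝ) * r = δ := by
    rw [hrdef]; field_simp
  have hrδ : r ≤ δ := by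
    have h1 : (1:ℝ) ≤ (N:ℝ) := by exact_mod_cast hN1
    have h2 : (1:ℝ) * r ≤ (N:ℝ) * r := mul_le_mul_of_nonneg_right h1 hr0.le
    linarith [hNr]
  set c : ℝ := (N:ℝ) * ε * Real.sqrt amax * Cd / δ with hcdef
  have hsqa : 0 < Real.sqrt amax := Real.sqrt_pos.2 hamax
  have hc0 : 0 ≤ c := by positivity
  have hδeq : δ = γ * (Real.exp 1 * ε * Real.sqrt amax * Cd) := by
    rw [hγdef]
    field_simp
  have hcle : c ≤ Real.exp (-1) := by
    rw [Real.exp_neg, hcdef, div_le_iff₀ hδ]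
    calc (N:ℝ) * ε * Real.sqrt amax * Cd
        = ((N:ℝ) * (ε * Real.sqrt amax * Cd)) := by ring
      _ ≤ γ * (ε * Real.sqrt amax * Cd) := by
          apply mul_le_mul_of_nonneg_right hNleγ (by positivity)
      _ = (Real.exp 1)⁻¹ * δ := by
          rw [hδeq]; field_simp
  have hpow : c ^ N ≤ Real.exp (1 - γ) := by
    calc c ^ N ≤ (Real.exp (-1)) ^ N := pow_le_pow_left₀ hc0 hcle N
      _ = Real.exp ((N:ℝ) * (-1)) := (Real.exp_nat_mul _ N).symm
      _ ≤ Real.exp (1 - γ) := Real.exp_le_exp.2 (by linarith)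
  -- the boundary set
  set F : Set X := frontier Dstar \ frontier Ω with hFdef
  have hDne : D.Nonempty := hDc.nonempty
  have hFne : F.Nonempty := by
    by_contra hcon
    rw [Set.not_nonempty_iff_eq_empty] at hcon
    rw [hcon] at hδdef
    rw [hδdef] at hδ
    simp only [setDist, Set.prod_empty, Set.image_empty, Real.sInf_empty] at hδ
    exact lt_irrefl 0 hδ
  have hDsfrΩ : ∀ x ∈ Dstar, x ∉ frontier Ω := by
    intro x hx hfx
    have hxint : x ∈ interior Ω := interior_maximal hsub2 hDso hx
    rw [frontier] at hfx
    exact hfx.2 hxint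
  -- distance facts
  have hdistDF : ∀ d ∈ D, ∀ y ∈ F, δ ≤ dist d y := by
    intro d hd y hy
    rw [hδdef]
    exact setDist_le_dist hd hy
  have hfF : ∀ y ∈ F, δ ≤ infDist y D := by
    intro y hy
    apply le_infDist' hDne
    intro d hd
    rw [dist_comm]
    exact hdistDF d hd y hy
  have hhD : ∀ x : X, δ - infDist x D ≤ infDist x F := by
    intro x
    apply le_infDist' hFne
    intro y hy
    have hxD : δ - dist x y ≤ infDist x D := by
      apply le_infDist' hDne
      intro d hd
      have h1 := hdistDF d hd y hy
      have h2 := dist_triangle d x y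
      rw [dist_comm x d]
      linarith
    linarith
  have hhDdist : ∀ x : X, ∀ y ∈ F, δ - infDist x D ≤ dist x y := fun x y hy =>
    le_trans (hhD x) (infDist_le_dist_of_mem hy)
  -- the chain of thickened sets
  set A : ℕ → Set X :=
    fun k => Nat.rec (motive := fun _ => Set X) D
      (fun _ Ak => Dstar ∩ {x | infDist x Ak < r}) k with hAdef
  have hA0 : A 0 = D := rfl
  have hAsucc : ∀ k, A (k + 1) = Dstar ∩ {x | infDist x (A k) < r} := fun k => rfl
  have hADstar : ∀ k, A k ⊆ Dstar := by
    intro k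
    cases k with
    | zero => rw [hA0]; exact hsub
    | succ k => rw [hAsucc]; exact Set.inter_subset_left
  have hAmono : ∀ k, A k ⊆ A (k + 1) := by
    intro k x hx
    rw [hAsucc]
    exact ⟨hADstar k hx, by
      simp only [Set.mem_setOf_eq]
      rw [infDist_zero_of_mem hx]
      exact hr0⟩
  have hDA : ∀ k, D ⊆ A k := by
    intro k
    induction k with
    | zero => exact subset_rfl
    | succ k ih => exact ih.trans (hAmono k)
  have hAne : ∀ k, (A k).Nonempty := fun k => hDne.mono (hDA k)
  have hAopen : ∀ k, IsOpen (A k) := by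
    intro k
    cases k with
    | zero => exact hDo
    | succ k =>
      rw [hAsucc]
      exact hDso.inter (isOpen_lt (continuous_infDist_pt _) continuous_const)
  have hAf : ∀ k, ∀ x ∈ A k, infDist x D ≤ (k:ℝ) * r := by
    intro k
    induction k with
    | zero =>
      intro x hx
      rw [hA0] at hx
      rw [infDist_zero_of_mem hx]
      simp
    | succ k ih =>
      intro x hx
      rw [hAsucc] at hx
      obtain ⟨x', hx', hdx⟩ := (infDist_lt_iff (hAne k)).1 hx.2
      have h1 : infDist x D ≤ infDist x' D + dist x x' := infDist_le_infDist_add_dist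
      have h2 := ih x' hx'
      push_cast
      linarith
  have hAclos : ∀ k, closure (A (k + 1)) ⊆ {x | infDist x (A k) ≤ r} := by
    intro k
    apply closure_minimal
    · rw [hAsucc]
      intro x hx
      obtain ⟨-, hx2⟩ := hx
      simp only [Set.mem_setOf_eq] at hx2 ⊢
      exact hx2.le
    · exact isClosed_le (continuous_infDist_pt _) continuous_const
  have hclosD : ∀ k, closure (A k) ⊆ {x | infDist x D ≤ (k:ℝ) * r} := by
    intro k
    apply closure_minimal
    · intro x hx; exact hAf k x hx
    · exact isClosed_le (continuous_infDist_pt _) continuous_const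
  have hAfr : ∀ k, frontier (A (k + 1)) ⊆ frontier Dstar ∪ {x | infDist x (A k) = r} := by
    intro k
    rw [hAsucc]
    refine (frontier_inter_subset _ _).trans ?_
    rintro x (⟨h1, _⟩ | ⟨_, h2⟩)
    · exact Or.inl h1
    · exact Or.inr (frontier_lt_subset_eq (continuous_infDist_pt _) continuous_const h2)
  have hAneq : ∀ k : ℕ, (k:ℝ) * r < δ → ∃ z ∈ Dstar, z ∉ A k := by
    intro k hk
    by_contra hcon
    push_neg at hcon
    obtain ⟨y, hy⟩ := hFne
    have hyc : y ∈ closure Dstar := frontier_subset_closure hy.1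
    have hycA : y ∈ closure (A k) := closure_mono (fun z hz => hcon z hz) hyc
    have h1 : infDist y D ≤ (k:ℝ) * r := hclosD k hycA
    have h2 : δ ≤ infDist y D := hfF y hy
    linarith
  -- the generic one-layer step
  have hstep : ∀ k : ℕ, (k:ℝ) * r < δ - r →
      setDist (A k) (frontier (A (k + 1)) \ frontier Ω) = r := by
    intro k hk
    obtain ⟨z, hzD, hzA⟩ := hAneq (k + 1) (by push_cast; linarith)
    obtain ⟨y, hyD, hyc, hyA⟩ := exists_rel_frontier hDsc.isPreconnected (hAopen (k + 1))
      (hADstar (k + 1)) (hAne (k + 1)) hzD hzA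
    have hyfr : y ∈ frontier (A (k + 1)) := by
      rw [(hAopen (k + 1)).frontier_eq]
      exact ⟨hyc, hyA⟩
    have hyT : y ∈ frontier (A (k + 1)) \ frontier Ω := ⟨hyfr, hDsfrΩ y hyD⟩
    apply le_antisymm
    · exact (setDist_le_infDist_right hyT (hAne k)).trans (hAclos k hyc)
    · apply le_setDist (hAne k) ⟨y, hyT⟩
      intro x hx w hw
      rcases hAfr k hw.1 with hfr | hlev
      · have hwF : w ∈ F := ⟨hfr, hw.2⟩
        have h1 : δ - infDist x D ≤ dist x w := hhDdist x w hwF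
        have h2 : infDist x D ≤ (k:ℝ) * r := hAf k x hx
        linarith
      · simp only [Set.mem_setOf_eq] at hlev
        have h1 : infDist w (A k) ≤ infDist x (A k) + dist w x := infDist_le_infDist_add_dist
        rw [infDist_zero_of_mem hx, hlev] at h1
        rw [dist_comm]
        linarith [h1]
  -- the conclusion, via the chain
  have hchain : Real.sqrt (∫ x in D, (u x) ^ 2 ∂μ) ≤
      c ^ N * Real.sqrt (∫ x in Dstar, (u x) ^ 2 ∂μ) := by
    rcases Nat.lt_or_ge N 2 with hN2 | hN2
    · -- N = 1
      have hNeq : N = 1 := le_antisymm (by omega) hN1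
      have hone : setDist D (frontier Dstar \ frontier Ω) = r := by
        rw [← hδdef, hrdef, hNeq]
        norm_num
      have := honelayer D Dstar hsub subset_rfl hone u hu
      rw [hNeq, pow_one]
      exact this
    · -- N ≥ 2
      obtain ⟨M, hM⟩ : ∃ M, N = M + 2 := ⟨N - 2, by omega⟩
      have hMr : ((M:ℝ) + 2) * r = δ := by
        rw [← hNr, hM]; push_cast; ring
      have hMr2 : (M:ℝ) * r + 2 * r = δ := by linear_combination hMr
      have hMnn : (0:ℝ) ≤ (M:ℝ) * r := mul_nonneg (Nat.cast_nonneg M) hr0.le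
      -- find the pin point q
      obtain ⟨y0, hy0⟩ := id hFne
      have hy0c : y0 ∈ closure Dstar := frontier_subset_closure hy0.1
      obtain ⟨z0, hz0D, hz0d⟩ := Metric.mem_closure_iff.1 hy0c r hr0
      have hz0F : infDist z0 F < r := by
        calc infDist z0 F ≤ dist z0 y0 := infDist_le_dist_of_mem hy0
          _ = dist y0 z0 := dist_comm _ _
          _ < r := hz0d
      obtain ⟨d0, hd0⟩ := id hDne
      have hd0F : δ ≤ infDist d0 F := by
        have h1 := hhD d0
        rw [infDist_zero_of_mem hd0] at h1
        linarith
      obtain ⟨q, hqD, hqF⟩ : ∃ q ∈ Dstar, infDist q F = r := by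
        have hiv := hDsc.isPreconnected.intermediate_value hz0D (hsub hd0)
          (continuous_infDist_pt F).continuousOn
        have hmem : r ∈ Set.Icc (infDist z0 F) (infDist d0 F) :=
          ⟨le_of_lt hz0F, le_trans hrδ hd0F⟩
        obtain ⟨q, hqD, hqF⟩ := hiv hmem
        exact ⟨q, hqD, hqF⟩
      set W : Set X := A (M + 1) ∪ {q} with hWdef
      have hqW : q ∈ W := by rw [hWdef]; exact Or.inr rfl
      have hWD : W ⊆ Dstar := by
        intro x hx
        rw [hWdef] at hx
        rcases hx with hx | hx
        · exact hADstar (M + 1) hx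
        · rw [Set.mem_singleton_iff.1 hx]; exact hqD
      have hAW : A (M + 1) ⊆ W := by rw [hWdef]; exact Set.subset_union_left
      have hWne : W.Nonempty := ⟨q, hqW⟩
      -- W ≠ Dstar
      have hWneq : ∃ z ∈ Dstar, z ∉ W := by
        by_contra hcon
        push_neg at hcon
        obtain ⟨y, hyF⟩ := id hFne
        have hyc : y ∈ closure W :=
          closure_mono (fun z hz => hcon z hz) (frontier_subset_closure hyF.1)
        rw [hWdef, closure_union] at hyc
        rcases hyc with hyA | hyq
        · have h1 : infDist y D ≤ ((M:ℝ) + 1) * r := by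
            have := hclosD (M + 1) hyA
            push_cast at this ⊢
            exact this
          have h2 : δ ≤ infDist y D := hfF y hyF
          linarith [hMr2, hr0]
        · have hdyq : dist y q = 0 := dist_zero_of_mem_closure_singleton hyq
          have e1 : infDist q F ≤ infDist y F + dist q y := infDist_le_infDist_add_dist
          rw [infDist_zero_of_mem hyF, dist_comm, hdyq, hqF] at e1
          linarith
      -- the special step: setDist (A M) (frontier W \ frontier Ω) = r
      have hclosA : closure (A (M + 1)) ⊆ {x | infDist x (A M) ≤ r} := hAclos M
      have hwitness : ∃ y, (y ∈ frontier W \ frontier Ω) ∧ infDist y (A M) ≤ r := by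
        by_cases hwit : ∃ y, y ∈ Dstar ∧ y ∈ closure (A (M + 1)) ∧ y ∉ interior W
        · obtain ⟨y, hyD, hyc, hyi⟩ := hwit
          refine ⟨y, ⟨⟨?_, hyi⟩, hDsfrΩ y hyD⟩, hclosA hyc⟩
          exact closure_mono hAW hyc
        · exfalso
          push_neg at hwit
          -- hwit : ∀ y, y ∈ Dstar → y ∈ closure (A (M+1)) → y ∈ interior W
          obtain ⟨z, hzD, hzW⟩ := hWneq
          by_cases hqc : q ∈ closure (A (M + 1))
          · -- interior W is clopen in Dstar
            have hclq : closure ({q} : Set X) ⊆ closure (A (M + 1)) :=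
              closure_minimal (Set.singleton_subset_iff.2 hqc) isClosed_closure
            apply no_clopen hDsc.isPreconnected isOpen_interior
              (interior_subset.trans hWD)
              ⟨d0, interior_maximal hAW (hAopen (M + 1)) (hDA (M + 1) hd0)⟩
              ?_ hzD (fun hzi => hzW (interior_subset hzi))
            intro y ⟨hyc, hyD⟩
            have : y ∈ closure W := closure_mono interior_subset hyc
            rw [hWdef, closure_union] at this
            rcases this with hyA | hyq
            · exact hwit y hyD hyA
            · exact hwit y hyD (hclq hyq)
          · -- q ∉ closure (A (M+1)); show q ∉ interior W, so interior W = A (M+1)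
            have hqiU : q ∉ interior W := by
              intro hqi
              obtain ⟨ε1, hε1, hball1⟩ := Metric.isOpen_iff.1 isOpen_interior q hqi
              obtain ⟨ε2, hε2, hball2⟩ :=
                Metric.isOpen_iff.1 isClosed_closure.isOpen_compl q hqc
              set ρ := min ε1 ε2 with hρdef
              have hρ0 : 0 < ρ := lt_min hε1 hε2
              have hsing : Metric.ball q ρ ⊆ {q} := by
                intro t ht
                have htW : t ∈ W :=
                  interior_subset (hball1 (Metric.ball_subset_ball (min_le_left _ _) ht))
                rcases htW with htA | htq
                · exact absurd (subset_closure htA)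
                    (hball2 (Metric.ball_subset_ball (min_le_right _ _) ht))
                · exact htq
              have hopen : IsOpen ({q} : Set X) := by
                rw [Metric.isOpen_iff]
                intro t ht
                rw [Set.mem_singleton_iff.1 ht]
                exact ⟨ρ, hρ0, hsing⟩
              have hclq : closure ({q} : Set X) ∩ Dstar ⊆ {q} := by
                rintro t ⟨htc, _⟩
                have hdtq : dist t q = 0 := dist_zero_of_mem_closure_singleton htc
                exact hsing (by rw [Metric.mem_ball, hdtq]; exact hρ0)
              have hd0q : d0 ∉ ({q} : Set X) := by
                intro he
                rw [Set.mem_singleton_iff.1 he, hqF] at hd0F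
                linarith [hMr2, hr0, hMnn]
              exact no_clopen hDsc.isPreconnected hopen
                (Set.singleton_subset_iff.2 hqD) ⟨q, rfl⟩ hclq (hsub hd0) hd0q
            have hUA : interior W = A (M + 1) := by
              apply Set.Subset.antisymm
              · intro t ht
                rcases interior_subset ht with htA | htq
                · exact htA
                · exact absurd (Set.mem_singleton_iff.1 htq ▸ ht) hqiU
              · exact interior_maximal hAW (hAopen (M + 1))
            apply no_clopen hDsc.isPreconnected (hAopen (M + 1)) (hADstar (M + 1))
              (hAne (M + 1)) ?_ hzD (fun hz => hzW (hAW hz))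
            intro y ⟨hyc, hyD⟩
            have := hwit y hyD hyc
            rwa [hUA] at this
      have hspecial : setDist (A M) (frontier W \ frontier Ω) = r := by
        obtain ⟨y, hyT, hyg⟩ := hwitness
        apply le_antisymm
        · exact (setDist_le_infDist_right hyT (hAne M)).trans hyg
        · apply le_setDist (hAne M) ⟨y, hyT⟩
          intro x hx w hw
          have hwc : w ∈ closure (A (M + 1)) ∪ closure ({q} : Set X) := by
            rw [← closure_union, ← hWdef]
            exact frontier_subset_closure hw.1
          have hfx : infDist x D ≤ (M:ℝ) * r := hAf M x hx
          rcases hwc with hwA | hwq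
          · by_cases hwD : w ∈ Dstar
            · have hwA' : w ∉ A (M + 1) := fun hin =>
                hw.1.2 (interior_maximal hAW (hAopen (M + 1)) hin)
              have hge : r ≤ infDist w (A M) := by
                by_contra hlt
                push_neg at hlt
                refine hwA' ?_
                rw [hAsucc]
                exact ⟨hwD, by simp only [Set.mem_setOf_eq]; exact hlt⟩
              have h1 : infDist w (A M) ≤ infDist x (A M) + dist w x :=
                infDist_le_infDist_add_dist
              rw [infDist_zero_of_mem hx] at h1
              rw [dist_comm]
              linarith
            · have hwfr : w ∈ frontier Dstar := by
                rw [hDso.frontier_eq]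
                exact ⟨closure_mono (hADstar (M + 1)) hwA, hwD⟩
              have hwF : w ∈ F := ⟨hwfr, hw.2⟩
              have h1 : δ - infDist x D ≤ dist x w := hhDdist x w hwF
              linarith [hMr2, hr0]
          · have hdwq : dist w q = 0 := dist_zero_of_mem_closure_singleton hwq
            have e1 : infDist x F ≤ infDist w F + dist x w := infDist_le_infDist_add_dist
            have e2 : infDist w F ≤ infDist q F + dist w q := infDist_le_infDist_add_dist
            rw [hdwq, add_zero, hqF] at e2
            have e3 : δ - infDist x D ≤ infDist x F := hhD x
            linarith [hMr2, hr0]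
      -- final step: setDist W (frontier Dstar \ frontier Ω) = r
      have hfinal : setDist W (frontier Dstar \ frontier Ω) = r := by
        apply le_antisymm
        · calc setDist W (frontier Dstar \ frontier Ω) ≤ infDist q F :=
                setDist_le_infDist_left hqW hFne
            _ = r := hqF
        · apply le_setDist hWne hFne
          intro x hxW y hy
          rw [hWdef] at hxW
          rcases hxW with hxA | hxq
          · have h1 : δ - infDist x D ≤ dist x y := hhDdist x y hy
            have h2 : infDist x D ≤ ((M:ℝ) + 1) * r := by
              have := hAf (M + 1) x hxA
              push_cast at this ⊢
              exact this
            have h3 : ((M:ℝ) + 1) * r = (M:ℝ) * r + r := by ring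
            linarith [hMr2, hr0]
          · rw [Set.mem_singleton_iff.1 hxq]
            calc r = infDist q F := hqF.symm
              _ ≤ dist q y := infDist_le_dist_of_mem hy
      -- assemble the chain
      have hordinary : ∀ j : ℕ, j ≤ M →
          Real.sqrt (∫ x in D, (u x) ^ 2 ∂μ) ≤
            c ^ j * Real.sqrt (∫ x in A j, (u x) ^ 2 ∂μ) := by
        intro j
        induction j with
        | zero =>
          intro _
          rw [pow_zero, one_mul, hA0]
        | succ j ih =>
          intro hj
          have hj' : j ≤ M := by omega
          have hjr : (j:ℝ) * r < δ - r := by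
            have hjM : (j:ℝ) ≤ (M:ℝ) - 1 := by
              have : (j:ℝ) + 1 ≤ (M:ℝ) := by exact_mod_cast hj
              linarith
            have h4 : (j:ℝ) * r ≤ ((M:ℝ) - 1) * r := mul_le_mul_of_nonneg_right hjM hr0.le
            have h5 : ((M:ℝ) - 1) * r = (M:ℝ) * r - r := by ring
            linarith [hMr2, hr0]
          have hs := honelayer (A j) (A (j + 1)) (hAmono j) (hADstar (j + 1))
            (hstep j hjr) u (hmono _ _ (hADstar (j + 1)) hu)
          calc Real.sqrt (∫ x in D, (u x) ^ 2 ∂μ)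
              ≤ c ^ j * Real.sqrt (∫ x in A j, (u x) ^ 2 ∂μ) := ih hj'
            _ ≤ c ^ j * (c * Real.sqrt (∫ x in A (j + 1), (u x) ^ 2 ∂μ)) :=
                mul_le_mul_of_nonneg_left hs (pow_nonneg hc0 j)
            _ = c ^ (j + 1) * Real.sqrt (∫ x in A (j + 1), (u x) ^ 2 ∂μ) := by ring
      have h1 := hordinary M le_rfl
      have h2 := honelayer (A M) W ((hAmono M).trans hAW) hWD hspecial u
        (hmono _ _ hWD hu)
      have h3 := honelayer W Dstar hWD subset_rfl hfinal u hu
      calc Real.sqrt (∫ x in D, (u x) ^ 2 ∂μ)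
          ≤ c ^ M * Real.sqrt (∫ x in A M, (u x) ^ 2 ∂μ) := h1
        _ ≤ c ^ M * (c * Real.sqrt (∫ x in W, (u x) ^ 2 ∂μ)) :=
            mul_le_mul_of_nonneg_left h2 (pow_nonneg hc0 M)
        _ ≤ c ^ M * (c * (c * Real.sqrt (∫ x in Dstar, (u x) ^ 2 ∂μ))) := by
            apply mul_le_mul_of_nonneg_left _ (pow_nonneg hc0 M)
            exact mul_le_mul_of_nonneg_left h3 hc0
        _ = c ^ (M + 2) * Real.sqrt (∫ x in Dstar, (u x) ^ 2 ∂μ) := by ring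
        _ = c ^ N * Real.sqrt (∫ x in Dstar, (u x) ^ 2 ∂μ) := by rw [hM]
  calc Real.sqrt (∫ x in D, (u x) ^ 2 ∂μ)
      ≤ c ^ N * Real.sqrt (∫ x in Dstar, (u x) ^ 2 ∂μ) := hchain
    _ ≤ Real.exp (1 - γ) * Real.sqrt (∫ x in Dstar, (u x) ^ 2 ∂μ) :=
        mul_le_mul_of_nonneg_right hpow (Real.sqrt_nonneg _)
end

section
/- For $d \ge 1$, let $\Theta > 0$, define $\Lambda = 2(4e\Theta)^d$ and $b = (2e\Theta + 1/2)^{-d/(d+1)}$. For positive integers $N, m$ with $(e\Theta(N+1)^2/N)^d \le m < (1 + e\Theta(N+1)^2/N)^d$ and $n = Nm > \Lambda$, setting $\xi = \Theta N m^{-1/d}$, one has $\xi^N \le e^{-b\, n^{1/(d+1)}}$. -/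
/-!
From `m ≥ A^d` with `A = eΘ(N+1)²/N` we get `ξ ≤ N² / (e (N+1)²)`, and since
`(1 + 1/N)^{2N} ≥ e` this gives `ξ^N ≤ e^{-(N+1)}`. On the other side, `m < (1 + A)^d` and
`4N ≤ (N+1)²` give `n = N m ≤ (N+1)^{d+1} (2eΘ + 1/2)^d`, i.e. `b n^{1/(d+1)} ≤ N + 1`.
-/

open Real

lemma exp_one_le_one_add_inv_pow_two_mul {N : ℕ} (hN : 0 < N) :
    exp 1 ≤ (1 + 1 / (N : ℝ)) ^ (2 * N) := by
  have hNr : (1 : ℝ) ≤ N := by exact_mod_cast hN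
  have hx : (0 : ℝ) < 1 + 1 / N := by positivity
  rw [← le_log_iff_exp_le (pow_pos hx _), log_pow]
  have hlog := one_sub_inv_le_log_of_pos hx
  have h : 1 - (1 + 1 / (N : ℝ))⁻¹ = 1 / (N + 1) := by field_simp; ring
  rw [h] at hlog
  calc (1 : ℝ) ≤ (2 * N : ℕ) * (1 / (N + 1)) := by
        push_cast; rw [mul_one_div, le_div_iff₀ (by positivity)]; linarith
    _ ≤ (2 * N : ℕ) * log (1 + 1 / N) := by gcongr

lemma pow_le_exp_neg_succ {N : ℕ} (hN : 0 < N) {ξ : ℝ} (hξ₀ : 0 ≤ ξ)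
    (hξ : ξ ≤ (N : ℝ) ^ 2 / (exp 1 * ((N : ℝ) + 1) ^ 2)) :
    ξ ^ N ≤ exp (-((N : ℝ) + 1)) := by
  have hNr : (0 : ℝ) < N := by exact_mod_cast hN
  have hq :
      (N : ℝ) ^ 2 / (exp 1 * ((N : ℝ) + 1) ^ 2) = ((1 + 1 / (N : ℝ)) ^ 2 * exp 1)⁻¹ := by
    field_simp
  calc ξ ^ N ≤ (((1 + 1 / (N : ℝ)) ^ 2 * exp 1)⁻¹) ^ N := by rw [← hq]; gcongr
    _ = ((1 + 1 / (N : ℝ)) ^ (2 * N) * exp 1 ^ N)⁻¹ := by rw [inv_pow, mul_pow, pow_mul]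
    _ ≤ (exp 1 * exp 1 ^ N)⁻¹ := by
        gcongr; exact exp_one_le_one_add_inv_pow_two_mul hN
    _ = exp (-((N : ℝ) + 1)) := by
        rw [← exp_nat_mul, ← exp_add, exp_neg]; ring_nf

lemma rpow_neg_one_div_le_inv {d : ℕ} (hd : d ≠ 0) {a x : ℝ} (ha : 0 < a) (h : a ^ d ≤ x) :
    x ^ (-1 / (d : ℝ)) ≤ a⁻¹ := by
  have hx : a ≤ x ^ (1 / (d : ℝ)) := by
    calc a = (a ^ d) ^ (1 / (d : ℝ)) := by rw [one_div, pow_rpow_inv_natCast ha.le hd]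
      _ ≤ x ^ (1 / (d : ℝ)) := by gcongr
  rw [neg_div, rpow_neg ((pow_pos ha d).le.trans h)]
  exact inv_anti₀ ha hx

lemma rpow_neg_div_succ_mul_rpow_one_div_succ_le {d : ℕ} {C x y : ℝ} (hC : 0 < C) (hx : 0 ≤ x)
    (hy : 0 ≤ y) (h : x ≤ y ^ (d + 1) * C ^ d) :
    C ^ (-(d : ℝ) / ((d : ℝ) + 1)) * x ^ (1 / ((d : ℝ) + 1)) ≤ y := by
  have hk : (0 : ℝ) < (d : ℝ) + 1 := by positivity
  rw [← rpow_le_rpow_iff (by positivity) hy hk, mul_rpow (by positivity) (by positivity),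
    ← rpow_mul hC.le, ← rpow_mul hx, div_mul_cancel₀ _ hk.ne', one_div_mul_cancel hk.ne',
    rpow_one, rpow_neg hC.le, inv_mul_le_iff₀ (by positivity)]
  exact_mod_cast h.trans_eq (mul_comm _ _)

lemma mul_one_add_pow_le {d : ℕ} (hd : d ≠ 0) {c x : ℝ} (hc : 0 ≤ c) (hx : 1 ≤ x) :
    x * (1 + c * (x + 1) ^ 2 / x) ^ d ≤ (x + 1) ^ (d + 1) * (2 * c + 1 / 2) ^ d := by
  have hx₀ : 0 < x := by linarith
  set q := (x + 1) / (2 * x) with hq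
  have hq₀ : 0 ≤ q := by positivity
  have hq₁ : q ≤ 1 := by rw [div_le_one (by positivity)]; linarith
  have hbase : 1 + c * (x + 1) ^ 2 / x ≤ (x + 1) * (2 * c + 1 / 2) * q := by
    rw [← sub_nonneg]
    have : (x + 1) * (2 * c + 1 / 2) * q - (1 + c * (x + 1) ^ 2 / x) =
        (x - 1) ^ 2 / (4 * x) := by
      rw [hq]; field_simp; ring
    rw [this]; positivity
  calc x * (1 + c * (x + 1) ^ 2 / x) ^ d ≤ x * ((x + 1) * (2 * c + 1 / 2) * q) ^ d := by
        gcongr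
    _ = x * (x + 1) ^ d * (2 * c + 1 / 2) ^ d * q ^ d := by rw [mul_pow, mul_pow]; ring
    _ ≤ x * (x + 1) ^ d * (2 * c + 1 / 2) ^ d * q :=
        mul_le_mul_of_nonneg_left (pow_le_of_le_one hq₀ hq₁ hd) (by positivity)
    _ = (x + 1) ^ (d + 1) * (2 * c + 1 / 2) ^ d / 2 := by rw [hq]; field_simp; ring
    _ ≤ (x + 1) ^ (d + 1) * (2 * c + 1 / 2) ^ d := div_le_self (by positivity) one_le_two

theorem stmt_11_general (d : ℕ) (hd : 1 ≤ d) (Θ : ℝ) (hΘ : 0 < Θ)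
    (b : ℝ)
    (hb : b = (2 * Real.exp 1 * Θ + 1 / 2) ^ (-(d : ℝ) / ((d : ℝ) + 1)))
    (N m n : ℕ) (hN : 0 < N) (hn : n = N * m)
    (hml : (Real.exp 1 * Θ * ((N : ℝ) + 1) ^ 2 / N) ^ d ≤ (m : ℝ))
    (hmu : (m : ℝ) < (1 + Real.exp 1 * Θ * ((N : ℝ) + 1) ^ 2 / N) ^ d)
    (ξ : ℝ) (hξ : ξ = Θ * N * (m : ℝ) ^ (-(1 : ℝ) / d)) :
    ξ ^ N ≤ Real.exp (-b * (n : ℝ) ^ ((1 : ℝ) / ((d : ℝ) + 1))) := by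
  have hd₀ : d ≠ 0 := by omega
  have hNr : (1 : ℝ) ≤ N := by exact_mod_cast hN
  have hξ_le : ξ ≤ (N : ℝ) ^ 2 / (exp 1 * ((N : ℝ) + 1) ^ 2) :=
    calc ξ ≤ Θ * N * (exp 1 * Θ * ((N : ℝ) + 1) ^ 2 / N)⁻¹ := by
          rw [hξ]; gcongr; exact rpow_neg_one_div_le_inv hd₀ (by positivity) hml
      _ = (N : ℝ) ^ 2 / (exp 1 * ((N : ℝ) + 1) ^ 2) := by field_simp
  have hn_le : (n : ℝ) ≤ ((N : ℝ) + 1) ^ (d + 1) * (2 * exp 1 * Θ + 1 / 2) ^ d :=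
    calc (n : ℝ) = N * m := by rw [hn, Nat.cast_mul]
      _ ≤ N * (1 + exp 1 * Θ * ((N : ℝ) + 1) ^ 2 / N) ^ d := by gcongr
      _ ≤ ((N : ℝ) + 1) ^ (d + 1) * (2 * exp 1 * Θ + 1 / 2) ^ d := by
          rw [mul_assoc 2]; exact mul_one_add_pow_le hd₀ (by positivity) hNr
  have hbn : b * (n : ℝ) ^ ((1 : ℝ) / ((d : ℝ) + 1)) ≤ N + 1 := by
    rw [hb]
    exact rpow_neg_div_succ_mul_rpow_one_div_succ_le (by positivity) n.cast_nonneg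
      (by positivity) hn_le
  calc ξ ^ N ≤ exp (-((N : ℝ) + 1)) := pow_le_exp_neg_succ hN (by rw [hξ]; positivity) hξ_le
    _ ≤ exp (-b * (n : ℝ) ^ ((1 : ℝ) / ((d : ℝ) + 1))) := by gcongr; linarith

/-- the elementary inequality converting the per-layer contraction factor
`ξ = Θ N m^{-1/d}` into a root-exponential bound `e^{-b n^{1/(d+1)}}` with `n = N m`. -/
theorem stmt_11 (d : ℕ) (hd : 1 ≤ d) (Θ : ℝ) (hΘ : 0 < Θ)
    (Λ b : ℝ)
    (hΛ : Λ = 2 * (4 * Real.exp 1 * Θ) ^ d)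
    (hb : b = (2 * Real.exp 1 * Θ + 1 / 2) ^ (-(d : ℝ) / ((d : ℝ) + 1)))
    (N m n : ℕ) (hN : 0 < N) (hm : 0 < m) (hn : n = N * m)
    (hml : (Real.exp 1 * Θ * ((N : ℝ) + 1) ^ 2 / N) ^ d ≤ (m : ℝ))
    (hmu : (m : ℝ) < (1 + Real.exp 1 * Θ * ((N : ℝ) + 1) ^ 2 / N) ^ d)
    (hnΛ : Λ < (n : ℝ))
    (ξ : ℝ) (hξ : ξ = Θ * N * (m : ℝ) ^ (-(1 : ℝ) / d)) :
    ξ ^ N ≤ Real.exp (-b * (n : ℝ) ^ ((1 : ℝ) / ((d : ℝ) + 1))) :=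
  stmt_11_general d hd Θ hΘ b hb N m n hN hn hml hmu ξ hξ
end
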